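/- Havil's Conjecture is false: there exist real numbers a and b with a ≠ 1/2 such that ∑_{n=1}^∞ ((-1)^n/n^a)·cos(b·ln n) = 0 and ∑_{n=1}^∞ ((-1)^n/n^a)·sin(b·ln n) = 0. -/

import Mathlib

/-!
Take `s = 2πi / log 2`, so that `2 ^ s = 1`. Splitting off the even terms,
`∑_{m ≤ 2M} (-1)^m m^(s-1) = 2^s ∑_{k ≤ M} k^(s-1) - ∑_{m ≤ 2M} m^(s-1)`
`= -∑_{M < m ≤ 2M} m^(s-1)`,
and by the mean value theorem this block sum is within `O(1/M)` of
`∫_M^{2M} x^(s-1) dx = ((2M)^s - M^s) / s = 0`. Since the terms tend to zero, all partial sums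
of `∑ (-1)^m m^(s-1)` tend to `0`; its real and imaginary parts are the two series with
`a = 1`, `b = 2π / log 2`.
-/

open Filter Topology Complex Finset

theorem Filter.Tendsto.of_even_odd {α : Type*} {u : ℕ → α} {l : Filter α}
    (h_even : Tendsto (fun M => u (2 * M)) atTop l)
    (h_odd : Tendsto (fun M => u (2 * M + 1)) atTop l) : Tendsto u atTop l := by
  rw [tendsto_atTop'] at h_even h_odd ⊢
  intro t ht
  obtain ⟨A, hA⟩ := h_even t ht
  obtain ⟨B, hB⟩ := h_odd t ht
  refine ⟨2 * (A + B), fun N hN => ?_⟩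
  obtain ⟨M, rfl | rfl⟩ := Nat.even_or_odd' N
  · exact hA M (by omega)
  · exact hB M (by omega)

theorem tendsto_sum_range_of_tendsto_sum_range_two_mul {E : Type*} [AddCommMonoid E]
    [TopologicalSpace E] [ContinuousAdd E] {f : ℕ → E} {l : E} (hf : Tendsto f atTop (𝓝 0))
    (h : Tendsto (fun M => ∑ n ∈ range (2 * M), f n) atTop (𝓝 l)) :
    Tendsto (fun N => ∑ n ∈ range N, f n) atTop (𝓝 l) := by
  refine h.of_even_odd ?_
  have hf_even : Tendsto (fun M => f (2 * M)) atTop (𝓝 0) :=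
    hf.comp (tendsto_id.const_mul_atTop' two_pos)
  simpa [sum_range_succ] using h.add hf_even

theorem sum_range_two_mul_neg_one_pow_mul {R : Type*} [Ring R] (f : ℕ → R) (M : ℕ) :
    ∑ n ∈ range (2 * M), (-1) ^ (n + 1) * f (n + 1) =
      2 * ∑ k ∈ range M, f (2 * (k + 1)) - ∑ n ∈ range (2 * M), f (n + 1) := by
  induction M with
  | zero => simp
  | succ M ih =>
    rw [sum_range_succ _ M, show 2 * (M + 1) = 2 * M + 1 + 1 from rfl, sum_range_succ,
      sum_range_succ, ih, sum_range_succ _ (2 * M + 1), sum_range_succ _ (2 * M),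
      (Even.neg_one_pow ⟨M + 1, by ring⟩ : (-1 : R) ^ (2 * M + 1 + 1) = 1),
      (Odd.neg_one_pow ⟨M, rfl⟩ : (-1 : R) ^ (2 * M + 1) = -1)]
    noncomm_ring

theorem hasDerivAt_ofReal_cpow_const_of_pos (c : ℂ) {x : ℝ} (hx : 0 < x) :
    HasDerivAt (fun y : ℝ => (y : ℂ) ^ c) (c * (x : ℂ) ^ (c - 1)) x :=
  (hasStrictDerivAt_cpow_const (ofReal_mem_slitPlane.2 hx)).hasDerivAt.comp_ofReal

theorem norm_ofReal_cpow_sub_ofReal_cpow_le {c : ℂ} (hc : c.re ≤ 1) {a b : ℝ} (ha : 0 < a)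
    (hab : a ≤ b) : ‖(b : ℂ) ^ c - (a : ℂ) ^ c‖ ≤ ‖c‖ * a ^ (c.re - 1) * (b - a) := by
  refine norm_image_sub_le_of_norm_deriv_le_segment'
    (fun x hx => (hasDerivAt_ofReal_cpow_const_of_pos c (ha.trans_le hx.1)).hasDerivWithinAt)
    (fun x hx => ?_) b ⟨hab, le_rfl⟩
  rw [norm_mul, norm_cpow_eq_rpow_re_of_pos (ha.trans_le hx.1), sub_re, one_re]
  gcongr ‖c‖ * ?_
  exact Real.rpow_le_rpow_of_nonpos ha hx.1 (by linarith)

theorem norm_mul_ofReal_add_one_cpow_sub_le {s : ℂ} (hs : s.re ≤ 2) {a : ℝ} (ha : 0 < a) :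
    ‖s * ((a + 1 : ℝ) : ℂ) ^ (s - 1) - (((a + 1 : ℝ) : ℂ) ^ s - (a : ℂ) ^ s)‖ ≤
      ‖s‖ * ‖s - 1‖ * a ^ (s.re - 2) := by
  set d := s * ((a + 1 : ℝ) : ℂ) ^ (s - 1)
  -- mean value theorem for `y ↦ y ^ s - d * y`, whose derivative vanishes at `a + 1`
  have key := norm_image_sub_le_of_norm_deriv_le_segment'
    (f := fun y : ℝ => (y : ℂ) ^ s - d * y)
    (f' := fun y => s * (y : ℂ) ^ (s - 1) - d) (C := ‖s‖ * ‖s - 1‖ * a ^ (s.re - 2))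
    (fun x hx => ((hasDerivAt_ofReal_cpow_const_of_pos s (ha.trans_le hx.1)).sub
      (by simpa using (ofRealCLM.hasDerivAt (x := x)).const_mul d)).hasDerivWithinAt)
    (fun x hx => ?_) (a + 1) ⟨by linarith, le_rfl⟩
  · have hdiff : ((a + 1 : ℝ) : ℂ) ^ s - d * ((a + 1 : ℝ) : ℂ) - ((a : ℂ) ^ s - d * a) =
        -(d - (((a + 1 : ℝ) : ℂ) ^ s - (a : ℂ) ^ s)) := by
      push_cast
      ring
    simpa only [hdiff, norm_neg, add_sub_cancel_left, mul_one] using key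
  · have hx0 : 0 < x := ha.trans_le hx.1
    have hmvt := norm_ofReal_cpow_sub_ofReal_cpow_le (c := s - 1)
      (by rw [sub_re, one_re]; linarith) hx0 hx.2.le
    rw [sub_re, one_re, show s.re - 1 - 1 = s.re - 2 by ring] at hmvt
    calc ‖s * (x : ℂ) ^ (s - 1) - d‖
          = ‖s‖ * ‖((a + 1 : ℝ) : ℂ) ^ (s - 1) - (x : ℂ) ^ (s - 1)‖ := by
          rw [← norm_mul, ← norm_neg]
          congr 1
          ring
      _ ≤ ‖s‖ * (‖s - 1‖ * x ^ (s.re - 2) * (a + 1 - x)) := by gcongr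
      _ ≤ ‖s‖ * (‖s - 1‖ * a ^ (s.re - 2) * 1) := by
          have hpow : x ^ (s.re - 2) ≤ a ^ (s.re - 2) :=
            Real.rpow_le_rpow_of_nonpos ha hx.1 (by linarith)
          have hlen : a + 1 - x ≤ 1 := by linarith [hx.1]
          have hlen_nonneg : 0 ≤ a + 1 - x := by linarith [hx.2]
          gcongr
      _ = ‖s‖ * ‖s - 1‖ * a ^ (s.re - 2) := by ring

theorem norm_mul_sum_Ico_cpow_sub_le {s : ℂ} (hs : s.re ≤ 2) {M K : ℕ} (hM : 0 < M)
    (hMK : M ≤ K) :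
    ‖s * ∑ n ∈ Ico M K, ((n + 1 : ℕ) : ℂ) ^ (s - 1) - ((K : ℂ) ^ s - (M : ℂ) ^ s)‖ ≤
      (K - M : ℕ) * (‖s‖ * ‖s - 1‖ * (M : ℝ) ^ (s.re - 2)) := by
  rw [← sum_Ico_sub (fun n : ℕ => (n : ℂ) ^ s) hMK, mul_sum, ← sum_sub_distrib]
  calc _ ≤ ∑ n ∈ Ico M K, ‖s‖ * ‖s - 1‖ * (M : ℝ) ^ (s.re - 2) :=
        norm_sum_le_of_le _ fun n hn => ?_
    _ = _ := by rw [sum_const, Nat.card_Ico, nsmul_eq_mul]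
  have hM' : (0 : ℝ) < M := by exact_mod_cast hM
  have hMn : (M : ℝ) ≤ n := by exact_mod_cast (mem_Ico.1 hn).1
  calc _ ≤ ‖s‖ * ‖s - 1‖ * (n : ℝ) ^ (s.re - 2) := by
        simpa using norm_mul_ofReal_add_one_cpow_sub_le hs (hM'.trans_le hMn)
    _ ≤ _ := by
        gcongr ‖s‖ * ‖s - 1‖ * ?_
        exact Real.rpow_le_rpow_of_nonpos hM' hMn (by linarith)

theorem sum_range_two_mul_neg_one_pow_mul_cpow {s : ℂ} (h2 : (2 : ℂ) ^ s = 1) (M : ℕ) :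
    ∑ n ∈ range (2 * M), (-1) ^ (n + 1) * ((n + 1 : ℕ) : ℂ) ^ (s - 1) =
      -∑ n ∈ Ico M (2 * M), ((n + 1 : ℕ) : ℂ) ^ (s - 1) := by
  have hhalf : ∀ k : ℕ, 2 * ((2 * k : ℕ) : ℂ) ^ (s - 1) = (k : ℂ) ^ (s - 1) := fun k => by
    rw [Nat.cast_mul, natCast_mul_natCast_cpow, Nat.cast_ofNat, cpow_sub _ _ two_ne_zero, h2,
      cpow_one]
    ring
  rw [sum_range_two_mul_neg_one_pow_mul (fun m => (m : ℂ) ^ (s - 1)), mul_sum]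
  simp only [hhalf]
  rw [← sum_range_add_sum_Ico _ (by omega : M ≤ 2 * M)]
  ring

theorem re_eq_zero_of_two_cpow_eq_one {s : ℂ} (h2 : (2 : ℂ) ^ s = 1) : s.re = 0 := by
  have h := congrArg norm h2
  rw [← Nat.cast_ofNat, norm_natCast_cpow_of_pos two_pos, norm_one, Nat.cast_ofNat,
    ← Real.rpow_zero 2, Real.rpow_right_inj two_pos (by norm_num)] at h
  exact h

theorem tendsto_sum_neg_one_pow_mul_cpow_sub_one {s : ℂ} (hs : s ≠ 0) (h2 : (2 : ℂ) ^ s = 1) :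
    Tendsto (fun N => ∑ n ∈ range N, (-1) ^ (n + 1) * ((n + 1 : ℕ) : ℂ) ^ (s - 1)) atTop
      (𝓝 0) := by
  have hre := re_eq_zero_of_two_cpow_eq_one h2
  refine tendsto_sum_range_of_tendsto_sum_range_two_mul ?_ ?_
  · have hnorm : ∀ n : ℕ,
        ‖(-1 : ℂ) ^ (n + 1) * ((n + 1 : ℕ) : ℂ) ^ (s - 1)‖ = 1 / ((n : ℝ) + 1) := fun n => by
        rw [norm_mul, norm_pow, norm_neg, norm_one, one_pow, one_mul,
          norm_natCast_cpow_of_pos n.succ_pos, sub_re, one_re, hre, zero_sub, Real.rpow_neg_one]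
        push_cast
        ring
    exact squeeze_zero_norm (fun n => (hnorm n).le) tendsto_one_div_add_atTop_nhds_zero_nat
  · refine squeeze_zero_norm' ?_ (tendsto_const_div_atTop_nhds_zero_nat ‖s - 1‖)
    filter_upwards [eventually_gt_atTop 0] with M hM
    have h2M : (((2 * M : ℕ)) : ℂ) ^ s = (M : ℂ) ^ s := by
      rw [Nat.cast_mul, natCast_mul_natCast_cpow, Nat.cast_ofNat, h2, one_mul]
    have hblock := norm_mul_sum_Ico_cpow_sub_le (by rw [hre]; norm_num) hM (by omega : M ≤ 2 * M)
    rw [h2M, sub_self, sub_zero, norm_mul, hre, show 2 * M - M = M by omega] at hblock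
    have hM' : (0 : ℝ) < M := by exact_mod_cast hM
    have hcount :
        (M : ℝ) * (‖s‖ * ‖s - 1‖ * (M : ℝ) ^ ((0 : ℝ) - 2)) = ‖s‖ * (‖s - 1‖ / M) := by
      rw [zero_sub, Real.rpow_neg hM'.le, Real.rpow_two]
      field_simp
    rw [sum_range_two_mul_neg_one_pow_mul_cpow h2, norm_neg]
    exact le_of_mul_le_mul_left (hblock.trans_eq hcount) (norm_pos_iff.2 hs)

theorem ofReal_cpow_eq_rpow_re_mul_exp {x : ℝ} (hx : 0 < x) (w : ℂ) :
    (x : ℂ) ^ w = ((x ^ w.re : ℝ) : ℂ) * exp ((w.im * Real.log x : ℝ) * I) := by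
  rw [cpow_def_of_ne_zero (ofReal_ne_zero.2 hx.ne'), ← ofReal_log hx.le, Real.rpow_def_of_pos hx,
    ofReal_exp, ← exp_add]
  congr 1
  apply Complex.ext <;> simp [mul_comm]

theorem two_cpow_two_pi_div_log_two_mul_I :
    (2 : ℂ) ^ (((2 * Real.pi / Real.log 2 : ℝ) : ℂ) * I) = 1 := by
  have hlog : ((Real.log 2 : ℝ) : ℂ) ≠ 0 := ofReal_ne_zero.2 (Real.log_pos one_lt_two).ne'
  rw [cpow_def_of_ne_zero two_ne_zero, ← exp_two_pi_mul_I, ← ofReal_ofNat,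
    ← ofReal_log zero_le_two]
  congr 1
  push_cast
  field_simp

theorem havil_conjecture_false :
    ∃ a b : ℝ, a ≠ 1 / 2 ∧
      Tendsto (fun N : ℕ => ∑ n ∈ Finset.range N,
          ((-1 : ℝ) ^ (n + 1) / ((n : ℝ) + 1) ^ a) * Real.cos (b * Real.log ((n : ℝ) + 1)))
        atTop (𝓝 0) ∧
      Tendsto (fun N : ℕ => ∑ n ∈ Finset.range N,
          ((-1 : ℝ) ^ (n + 1) / ((n : ℝ) + 1) ^ a) * Real.sin (b * Real.log ((n : ℝ) + 1)))
        atTop (𝓝 0) := by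
  have hs : ((2 * Real.pi / Real.log 2 : ℝ) : ℂ) * I ≠ 0 :=
    mul_ne_zero (ofReal_ne_zero.2 (div_ne_zero (by positivity) (Real.log_pos one_lt_two).ne'))
      I_ne_zero
  have hsum := tendsto_sum_neg_one_pow_mul_cpow_sub_one hs two_cpow_two_pi_div_log_two_mul_I
  set b : ℝ := 2 * Real.pi / Real.log 2
  have hterm : ∀ n : ℕ, (-1 : ℂ) ^ (n + 1) * ((n + 1 : ℕ) : ℂ) ^ ((b : ℂ) * I - 1) =
      (((-1 : ℝ) ^ (n + 1) / ((n : ℝ) + 1) ^ (1 : ℝ) : ℝ) : ℂ) *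
        exp ((b * Real.log ((n : ℝ) + 1) : ℝ) * I) := fun n => by
    rw [show ((n + 1 : ℕ) : ℂ) = (((n : ℝ) + 1 : ℝ) : ℂ) by push_cast; rfl,
      ofReal_cpow_eq_rpow_re_mul_exp (by positivity)]
    simp [Real.rpow_neg_one, div_eq_mul_inv, mul_assoc]
  refine ⟨1, b, by norm_num, ?_, ?_⟩
  · have hre := (continuous_re.tendsto 0).comp hsum
    simpa only [Function.comp_def, re_sum, hterm, re_ofReal_mul, exp_ofReal_mul_I_re,
      zero_re] using hre
  · have him := (continuous_im.tendsto 0).comp hsum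
    simpa only [Function.comp_def, im_sum, hterm, im_ofReal_mul, exp_ofReal_mul_I_im,
      zero_im] using him
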